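/- arXiv:2311.05399 — 2 statements merged into one kernel-verified Lean document; each statement's English description precedes it below -/
import Mathlib

section
/- For (λ, μ) ∈ ℂ², (λ, μ) ≠ (0, 0), let Q(λ:μ) be the quadratic form x₀(λx₂ − μx₃) − x₁(μx₄ − λx₃) on ℂ⁵, and for a scalar t ∈ ℂ let P'(t, λ, μ) ⊂ ℂ⁵ be the solution set of the two linear equations t·x₀ = μx₄ − λx₃ and λx₂ − μx₃ = t·x₁. Then: (a) P'(t, λ, μ) is a 3-dimensional subspace on which Q(λ:μ) vanishes identically; and (b) for t₁ ≠ t₂, the subspaces P'(t₁, λ, μ) and P'(t₂, λ, μ) are distinct and intersect in the 1-dimensional subspace {x₀ = x₁ = 0, λx₂ = μx₃, μx₄ = λx₃}. -/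
/-- The solution set `P'(t, λ, μ) ⊆ ℂ⁵` of the two linear equations
`t·x₀ = μx₄ − λx₃` and `λx₂ − μx₃ = t·x₁`. -/
noncomputable def planeP' (t l m : ℂ) : Submodule ℂ (Fin 5 → ℂ) where
  carrier := {x | t * x 0 = m * x 4 - l * x 3 ∧ l * x 2 - m * x 3 = t * x 1}
  add_mem' := by
    rintro a b ⟨ha1, ha2⟩ ⟨hb1, hb2⟩
    refine ⟨?_, ?_⟩ <;> simp only [Pi.add_apply]
    · linear_combination ha1 + hb1
    · linear_combination ha2 + hb2
  zero_mem' := by simp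
  smul_mem' := by
    rintro c a ⟨ha1, ha2⟩
    refine ⟨?_, ?_⟩ <;> simp only [Pi.smul_apply, smul_eq_mul]
    · linear_combination c * ha1
    · linear_combination c * ha2

/-- The subspace `{x₀ = x₁ = 0, λx₂ = μx₃, μx₄ = λx₃} ⊆ ℂ⁵`. -/
noncomputable def lineL (l m : ℂ) : Submodule ℂ (Fin 5 → ℂ) where
  carrier := {x | x 0 = 0 ∧ x 1 = 0 ∧ l * x 2 = m * x 3 ∧ m * x 4 = l * x 3}
  add_mem' := by
    rintro a b ⟨ha0, ha1, ha2, ha3⟩ ⟨hb0, hb1, hb2, hb3⟩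
    refine ⟨?_, ?_, ?_, ?_⟩ <;> simp only [Pi.add_apply]
    · rw [ha0, hb0, add_zero]
    · rw [ha1, hb1, add_zero]
    · linear_combination ha2 + hb2
    · linear_combination ha3 + hb3
  zero_mem' := by simp
  smul_mem' := by
    rintro c a ⟨ha0, ha1, ha2, ha3⟩
    refine ⟨?_, ?_, ?_, ?_⟩ <;> simp only [Pi.smul_apply, smul_eq_mul]
    · rw [ha0, mul_zero]
    · rw [ha1, mul_zero]
    · linear_combination c * ha2
    · linear_combination c * ha3


/-!
On `P'(t, λ, μ)` the two brackets of `Q(λ:μ)` are `t·x₁` and `t·x₀`, so `Q = x₀·t x₁ − x₁·t x₀ = 0`.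
`P'` is the kernel of two linear forms that are independent as soon as `(λ, μ) ≠ (0, 0)`
(already on the coordinates `x₂, x₃, x₄`), so `dim P' = 3`. Subtracting the equations of two members
gives `(t₁ − t₂)x₀ = (t₁ − t₂)x₁ = 0`, which cuts out the line spanned by `(0, 0, μ², λμ, λ²)`;
being 1-dimensional it cannot be a 3-dimensional `P'`, so the members are distinct.
-/

@[simp]
lemma mem_planeP' {t l m : ℂ} {x : Fin 5 → ℂ} :
    x ∈ planeP' t l m ↔ t * x 0 = m * x 4 - l * x 3 ∧ l * x 2 - m * x 3 = t * x 1 :=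
  Iff.rfl

@[simp]
lemma mem_lineL {l m : ℂ} {x : Fin 5 → ℂ} :
    x ∈ lineL l m ↔ x 0 = 0 ∧ x 1 = 0 ∧ l * x 2 = m * x 3 ∧ m * x 4 = l * x 3 :=
  Iff.rfl

lemma Prod.ne_or_ne_of_mk_ne_mk {α β : Type*} {a a' : α} {b b' : β} (h : (a, b) ≠ (a', b')) :
    a ≠ a' ∨ b ≠ b' := by
  rwa [Ne, Prod.mk.injEq, not_and_or] at h

lemma quadric_eq_zero_of_mem_planeP' {t l m : ℂ} {x : Fin 5 → ℂ} (hx : x ∈ planeP' t l m) :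
    x 0 * (l * x 2 - m * x 3) - x 1 * (m * x 4 - l * x 3) = 0 := by
  obtain ⟨h₀, h₁⟩ := hx
  linear_combination x 0 * h₁ + x 1 * h₀

noncomputable def planeEquations (t l m : ℂ) : (Fin 5 → ℂ) →ₗ[ℂ] ℂ × ℂ :=
  let x (i : Fin 5) : (Fin 5 → ℂ) →ₗ[ℂ] ℂ := LinearMap.proj i
  (t • x 0 - (m • x 4 - l • x 3)).prod (l • x 2 - m • x 3 - t • x 1)

lemma planeP'_eq_ker_planeEquations (t l m : ℂ) :
    planeP' t l m = LinearMap.ker (planeEquations t l m) := by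
  ext x
  simp [planeEquations, sub_eq_zero]

lemma planeEquations_surjective (t : ℂ) {l m : ℂ} (h : (l, m) ≠ (0, 0)) :
    Function.Surjective (planeEquations t l m) := by
  rintro ⟨y₁, y₂⟩
  rcases Prod.ne_or_ne_of_mk_ne_mk h with hl | hm
  · refine ⟨![0, 0, (y₂ + m * (y₁ / l)) / l, y₁ / l, 0], Prod.ext ?_ ?_⟩ <;>
      simp [planeEquations, field]
  · refine ⟨![0, 0, 0, -y₂ / m, (l * (-y₂ / m) - y₁) / m], Prod.ext ?_ ?_⟩ <;>
      simp [planeEquations, field]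

lemma finrank_planeP' (t : ℂ) {l m : ℂ} (h : (l, m) ≠ (0, 0)) :
    Module.finrank ℂ (planeP' t l m) = 3 := by
  have hrank := (planeEquations t l m).finrank_range_add_finrank_ker
  rw [LinearMap.range_eq_top.mpr (planeEquations_surjective t h), finrank_top,
    Module.finrank_prod, Module.finrank_self, Module.finrank_fin_fun] at hrank
  rw [planeP'_eq_ker_planeEquations]
  omega

lemma lineL_eq_span {l m : ℂ} (h : (l, m) ≠ (0, 0)) :
    lineL l m = ℂ ∙ ![0, 0, m ^ 2, l * m, l ^ 2] := by
  refine le_antisymm (fun x hx => ?_) ?_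
  · obtain ⟨hx₀, hx₁, h₂, h₄⟩ := hx
    rw [Submodule.mem_span_singleton]
    rcases Prod.ne_or_ne_of_mk_ne_mk h with hl | hm
    · refine ⟨x 4 / l ^ 2, funext fun i => ?_⟩
      fin_cases i <;> simp [hx₀, hx₁] <;> field_simp
      · linear_combination m * h₄ - l * h₂
      · linear_combination h₄
    · refine ⟨x 2 / m ^ 2, funext fun i => ?_⟩
      fin_cases i <;> simp [hx₀, hx₁] <;> field_simp
      · linear_combination h₂
      · linear_combination l * h₂ - m * h₄
  · rw [Submodule.span_le, Set.singleton_subset_iff, SetLike.mem_coe, mem_lineL]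
    refine ⟨rfl, rfl, ?_, ?_⟩ <;> simp <;> ring

lemma finrank_lineL {l m : ℂ} (h : (l, m) ≠ (0, 0)) : Module.finrank ℂ (lineL l m) = 1 := by
  rw [lineL_eq_span h, finrank_span_singleton]
  intro hv
  have h₂ : m ^ 2 = 0 := congrFun hv 2
  have h₄ : l ^ 2 = 0 := congrFun hv 4
  exact h (by simp_all)

lemma planeP'_inf_planeP' {t₁ t₂ : ℂ} (ht : t₁ ≠ t₂) (l m : ℂ) :
    planeP' t₁ l m ⊓ planeP' t₂ l m = lineL l m := by
  have hdt : t₁ - t₂ ≠ 0 := sub_ne_zero.mpr ht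
  ext x
  simp only [Submodule.mem_inf, mem_planeP', mem_lineL]
  constructor
  · rintro ⟨⟨h₁₀, h₁₁⟩, h₂₀, h₂₁⟩
    have hx₀ : x 0 = 0 :=
      (mul_eq_zero.mp (by linear_combination h₁₀ - h₂₀ : (t₁ - t₂) * x 0 = 0)).resolve_left hdt
    have hx₁ : x 1 = 0 :=
      (mul_eq_zero.mp (by linear_combination h₂₁ - h₁₁ : (t₁ - t₂) * x 1 = 0)).resolve_left hdt
    exact ⟨hx₀, hx₁, by linear_combination h₁₁ + t₁ * hx₁, by linear_combination -h₁₀ + t₁ * hx₀⟩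
  · rintro ⟨hx₀, hx₁, h₂, h₄⟩
    simp only [hx₀, hx₁, mul_zero]
    exact ⟨⟨by linear_combination -h₄, by linear_combination h₂⟩,
      by linear_combination -h₄, by linear_combination h₂⟩

/-- For the pencil `Q(λ:μ) = x₀(λx₂ − μx₃) − x₁(μx₄ − λx₃)` with `(λ, μ) ≠ (0, 0)`:
(a) each `P'(t, λ, μ)` is a 3-dimensional subspace on which `Q(λ:μ)` vanishes identically;
(b) for `t₁ ≠ t₂` the subspaces `P'(t₁, λ, μ)` and `P'(t₂, λ, μ)` are distinct and their
intersection is the 1-dimensional subspace `{x₀ = x₁ = 0, λx₂ = μx₃, μx₄ = λx₃}`. -/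
theorem planeP'_dim_and_intersection (l m : ℂ) (h : (l, m) ≠ (0, 0)) :
    (∀ t : ℂ, Module.finrank ℂ (planeP' t l m) = 3 ∧
      ∀ x : Fin 5 → ℂ, x ∈ planeP' t l m →
        x 0 * (l * x 2 - m * x 3) - x 1 * (m * x 4 - l * x 3) = 0) ∧
    (∀ t₁ t₂ : ℂ, t₁ ≠ t₂ →
      planeP' t₁ l m ≠ planeP' t₂ l m ∧
      planeP' t₁ l m ⊓ planeP' t₂ l m = lineL l m ∧
      Module.finrank ℂ (lineL l m) = 1) := by
  refine ⟨fun t => ⟨finrank_planeP' t h, fun x => quadric_eq_zero_of_mem_planeP'⟩,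
    fun t₁ t₂ ht => ⟨fun heq => ?_, planeP'_inf_planeP' ht l m, finrank_lineL h⟩⟩
  have hline : planeP' t₁ l m = lineL l m := by
    rw [← planeP'_inf_planeP' ht, heq, inf_idem]
  have := finrank_planeP' t₁ h
  rw [hline, finrank_lineL h] at this
  omega
end

section
/- Let A and B be symmetric 5×5 complex matrices that are linearly independent, and suppose that rank(λA + μB) ≤ 3 for all (λ, μ) ∈ ℂ². Then there exists (λ, μ) ≠ (0, 0) such that rank(λA + μB) ≤ 2. -/
/-!
Let `D f g ∈ ℂ[t]` be the `3 × 3` minors of the pencil `A + t B`. As every member has rank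
`≤ 3`, it factors through `ℂ³`, so by Cauchy–Binet `D f g * D f' g' = D f g' * D f' g`;
with symmetry, `D f g ^ 2 = D f f * D g g`. Hence all products `D f f * D g g` are squares.
If some nonzero `D f₀ f₀` has a root of odd multiplicity, that root is a root of every `D f f`,
hence of every `D f g`, and the corresponding member has rank `≤ 2`. Otherwise `D f₀ f₀`, and
with it every `D f f`, has even degree `≤ 3`, hence `≤ 2`; then every `D f g` has degree `≤ 2`,
so its `t³`-coefficient, a `3 × 3` minor of `B`, vanishes, and `B` has rank `≤ 2`.
-/

open Matrix Polynomial Submodule Module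

namespace Matrix

section Minors

variable {m n K : Type*} [Finite m] [Fintype n] [Field K]

theorem exists_linearIndependent_submatrix_row_of_le_rank {M : Matrix m n K} {k : ℕ}
    (hk : k ≤ M.rank) : ∃ f : Fin k → m, LinearIndependent K (M.submatrix f id).row := by
  obtain ⟨κ, a, ha, hspan, hli⟩ := exists_linearIndependent' K M.row
  have : Finite κ := Finite.of_injective a ha
  have : Fintype κ := Fintype.ofFinite κ
  have hcard : Fintype.card κ = M.rank := by
    rw [linearIndependent_iff_card_eq_finrank_span.mp hli, Set.finrank, hspan,
      rank_eq_finrank_span_row]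
  obtain ⟨e⟩ : Nonempty (Fin k ↪ κ) :=
    Function.Embedding.nonempty_of_card_le (by simpa [hcard])
  exact ⟨a ∘ e, hli.comp e e.injective⟩

theorem exists_det_submatrix_ne_zero_of_le_rank {M : Matrix m n K} {k : ℕ} (hk : k ≤ M.rank) :
    ∃ (f : Fin k → m) (g : Fin k → n), (M.submatrix f g).det ≠ 0 := by
  obtain ⟨f, hf⟩ := exists_linearIndependent_submatrix_row_of_le_rank hk
  have hrank : (M.submatrix f id)ᵀ.rank = k := by
    rw [rank_transpose, hf.rank_matrix, Fintype.card_fin]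
  obtain ⟨g, hg⟩ := exists_linearIndependent_submatrix_row_of_le_rank hrank.ge
  refine ⟨f, g, ?_⟩
  rw [← det_transpose, transpose_submatrix]
  have hunit := linearIndependent_rows_iff_isUnit.mp hg
  simpa [isUnit_iff_ne_zero] using (isUnit_iff_isUnit_det _).mp hunit

theorem rank_lt_iff_forall_det_submatrix_eq_zero {M : Matrix m n K} {k : ℕ} :
    M.rank < k ↔ ∀ (f : Fin k → m) (g : Fin k → n), (M.submatrix f g).det = 0 := by
  refine ⟨fun hlt f g => by_contra fun h0 => ?_, fun h => ?_⟩
  · have := rank_submatrix_le M f g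
    rw [rank_of_det_ne_zero h0, Fintype.card_fin] at this
    omega
  · by_contra! hk
    obtain ⟨f, g, hfg⟩ := exists_det_submatrix_ne_zero_of_le_rank hk
    exact hfg (h f g)

theorem exists_eq_mul_of_rank_eq {M : Matrix m n K} {r : ℕ} (hr : M.rank = r) :
    ∃ (P : Matrix m (Fin r) K) (Q : Matrix (Fin r) n K), M = P * Q := by
  let b := finBasisOfFinrankEq K (span K (Set.range M.row))
    ((rank_eq_finrank_span_row M).symm.trans hr)
  have hM : ∀ i, M i ∈ span K (Set.range M.row) := fun i => subset_span ⟨i, rfl⟩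
  refine ⟨of fun i j => b.repr ⟨M i, hM i⟩ j, of fun j => (b j : n → K), ?_⟩
  ext i y
  have := congrArg (fun v : span K (Set.range M.row) => (v : n → K) y)
    (b.sum_repr ⟨M i, hM i⟩)
  simp only [Submodule.coe_sum, Submodule.coe_smul, Finset.sum_apply, Pi.smul_apply,
    smul_eq_mul] at this
  simp [mul_apply, ← this]

theorem det_submatrix_mul_det_submatrix_of_rank_le {M : Matrix m n K} {k : ℕ} (hM : M.rank ≤ k)
    (f f' : Fin k → m) (g g' : Fin k → n) :
    (M.submatrix f g).det * (M.submatrix f' g').det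
      = (M.submatrix f g').det * (M.submatrix f' g).det := by
  rcases hM.lt_or_eq with hlt | heq
  · simp [rank_lt_iff_forall_det_submatrix_eq_zero.mp hlt]
  · obtain ⟨P, Q, rfl⟩ := exists_eq_mul_of_rank_eq heq
    simp only [submatrix_mul _ _ _ _ _ Function.bijective_id, det_mul]
    ring

theorem IsSymm.det_submatrix_mul_self_of_rank_le {M : Matrix n n K} (hM : M.IsSymm) {k : ℕ}
    (hk : M.rank ≤ k) (f g : Fin k → n) :
    (M.submatrix f g).det * (M.submatrix f g).det
      = (M.submatrix f f).det * (M.submatrix g g).det := by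
  have hgf : (M.submatrix g f).det = (M.submatrix f g).det := by
    rw [← det_transpose, transpose_submatrix, hM.eq]
  rw [← det_submatrix_mul_det_submatrix_of_rank_le hk f g g f, hgf]

end Minors

section Pencil

variable {m n R : Type*} [CommRing R]

-- `A + X • B`, written in the shape used by `Polynomial.natDegree_det_X_add_C_le`.
noncomputable def pencil (A B : Matrix m n R) : Matrix m n R[X] := (X : R[X]) • B.map C + A.map C

theorem pencil_submatrix {l o : Type*} (A B : Matrix m n R) (f : l → m) (g : o → n) :
    (pencil A B).submatrix f g = pencil (A.submatrix f g) (B.submatrix f g) :=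
  rfl

variable [Fintype n] [DecidableEq n]

theorem eval_det_pencil (A B : Matrix n n R) (s : R) :
    (pencil A B).det.eval s = (A + s • B).det := by
  rw [← coe_evalRingHom, RingHom.map_det]
  congr 1
  ext i j
  simp only [pencil, RingHom.mapMatrix_apply, map_apply, add_apply, smul_apply, smul_eq_mul,
    coe_evalRingHom, eval_add, eval_mul, eval_X, eval_C]
  ring

theorem natDegree_det_pencil_le (A B : Matrix n n R) :
    (pencil A B).det.natDegree ≤ Fintype.card n :=
  natDegree_det_X_add_C_le B A

theorem coeff_det_pencil_card (A B : Matrix n n R) :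
    (pencil A B).det.coeff (Fintype.card n) = B.det :=
  coeff_det_X_add_C_card B A

end Pencil

theorem IsSymm.det_pencil_submatrix_mul_self {n K : Type*} [Fintype n] [Field K] [Infinite K]
    {A B : Matrix n n K} (hA : A.IsSymm) (hB : B.IsSymm) {k : ℕ}
    (hk : ∀ s : K, (A + s • B).rank ≤ k) (f g : Fin k → n) :
    ((pencil A B).submatrix f g).det * ((pencil A B).submatrix f g).det
      = ((pencil A B).submatrix f f).det * ((pencil A B).submatrix g g).det := by
  refine Polynomial.funext fun s => ?_
  simp only [eval_mul, pencil_submatrix, eval_det_pencil]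
  exact (hA.add (hB.smul s)).det_submatrix_mul_self_of_rank_le (hk s) f g

end Matrix

namespace Polynomial

variable {R : Type*} [CommRing R] [IsDomain R]

theorem eval_eq_zero_of_isSquare_mul {p q : R[X]} (hpq : IsSquare (p * q)) (hp : p ≠ 0) {s : R}
    (hs : Odd (p.rootMultiplicity s)) : q.eval s = 0 := by
  obtain ⟨r, hr⟩ := hpq
  by_cases hq : q = 0
  · simp [hq]
  have hr0 : r * r ≠ 0 := hr ▸ mul_ne_zero hp hq
  have hmult := rootMultiplicity_mul (x := s) (mul_ne_zero hp hq)
  rw [hr, rootMultiplicity_mul hr0] at hmult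
  have hpos : 0 < q.rootMultiplicity s := by
    obtain ⟨k, hk⟩ := hs
    omega
  exact (rootMultiplicity_pos hq).mp hpos

theorem even_natDegree_iff_of_isSquare_mul {p q : R[X]} (hpq : IsSquare (p * q)) (hp : p ≠ 0)
    (hq : q ≠ 0) : Even p.natDegree ↔ Even q.natDegree := by
  obtain ⟨r, hr⟩ := hpq
  have hdeg := natDegree_mul hp hq
  rw [hr, ← sq, natDegree_pow] at hdeg
  constructor <;> intro ⟨k, hk⟩ <;> exact ⟨r.natDegree - k, by omega⟩

theorem natDegree_le_of_mul_self_eq {p q r : R[X]} (h : p * p = q * r) {d : ℕ}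
    (hq : q.natDegree ≤ d) (hr : r.natDegree ≤ d) : p.natDegree ≤ d := by
  have := natDegree_mul_le (p := q) (q := r)
  rw [← h, ← sq, natDegree_pow] at this
  omega

theorem even_natDegree_of_forall_even_rootMultiplicity {K : Type*} [Field K] [IsAlgClosed K]
    {p : K[X]} (h : ∀ s, Even (p.rootMultiplicity s)) : Even p.natDegree := by
  classical
  rw [← IsAlgClosed.card_roots_eq_natDegree, ← Multiset.toFinset_sum_count_eq]
  exact Finset.even_sum _ fun s _ => count_roots p ▸ h s

theorem exists_forall_eval_eq_zero_or_forall_even_natDegree {K ι : Type*} [Field K] [IsAlgClosed K]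
    (d : ι → K[X]) (hd : ∀ i j, IsSquare (d i * d j)) :
    (∃ s, ∀ i, (d i).eval s = 0) ∨ ∀ i, Even (d i).natDegree := by
  by_cases hzero : ∀ i, d i = 0
  · exact .inl ⟨0, fun i => by simp [hzero i]⟩
  push Not at hzero
  obtain ⟨i₀, hi₀⟩ := hzero
  by_cases hodd : ∃ s, Odd ((d i₀).rootMultiplicity s)
  · obtain ⟨s, hs⟩ := hodd
    exact .inl ⟨s, fun i => eval_eq_zero_of_isSquare_mul (hd i₀ i) hi₀ hs⟩
  simp only [not_exists, Nat.not_odd_iff_even] at hodd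
  have heven := even_natDegree_of_forall_even_rootMultiplicity hodd
  refine .inr fun i => ?_
  by_cases hi : d i = 0
  · simp [hi]
  · exact (even_natDegree_iff_of_isSquare_mul (hd i₀ i) hi₀ hi).mp heven

end Polynomial

theorem pencil_rank_three_has_rank_two_member_general
    (A B : Matrix (Fin 5) (Fin 5) ℂ) (hA : A.IsSymm) (hB : B.IsSymm)
    (h : ∀ l m : ℂ, (l • A + m • B).rank ≤ 3) :
    ∃ l m : ℂ, (l, m) ≠ (0, 0) ∧ (l • A + m • B).rank ≤ 2 := by
  let D (f g : Fin 3 → Fin 5) := ((pencil A B).submatrix f g).det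
  have hsq : ∀ f g, D f g * D f g = D f f * D g g :=
    hA.det_pencil_submatrix_mul_self hB fun s => by simpa using h 1 s
  rcases exists_forall_eval_eq_zero_or_forall_even_natDegree (fun f => D f f)
    (fun f g => ⟨D f g, (hsq f g).symm⟩) with ⟨s, hs⟩ | heven
  · refine ⟨1, s, by simp, Nat.le_of_lt_succ ?_⟩
    rw [one_smul, rank_lt_iff_forall_det_submatrix_eq_zero]
    intro f g
    have hfg : (D f g).eval s = 0 := by simpa [hs] using congrArg (eval s) (hsq f g)
    exact (eval_det_pencil _ _ s).symm.trans hfg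
  · refine ⟨0, 1, by simp, Nat.le_of_lt_succ ?_⟩
    rw [zero_smul, one_smul, zero_add, rank_lt_iff_forall_det_submatrix_eq_zero]
    have hdiag : ∀ f, (D f f).natDegree ≤ 2 := fun f => by
      have : (D f f).natDegree ≤ 3 :=
        (natDegree_det_pencil_le _ _).trans_eq (Fintype.card_fin 3)
      obtain ⟨j, hj⟩ := heven f
      omega
    intro f g
    have hfg : (D f g).natDegree < 3 :=
      (natDegree_le_of_mul_self_eq (hsq f g) (hdiag f) (hdiag g)).trans_lt (by norm_num)
    exact (coeff_det_pencil_card _ _).symm.trans (coeff_eq_zero_of_natDegree_lt hfg)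

/-- If `A, B` are linearly independent symmetric `5 × 5` complex matrices such that every
member `λA + μB` of the pencil they span has rank `≤ 3`, then some nonzero member of the
pencil has rank `≤ 2`. (There are no lines contained in `Z₃ ∖ Z₂`: every pencil of
quadrics of rank `≤ 3` contains a member of rank `≤ 2`.) -/
theorem pencil_rank_three_has_rank_two_member
    (A B : Matrix (Fin 5) (Fin 5) ℂ) (hA : A.IsSymm) (hB : B.IsSymm)
    (hind : LinearIndependent ℂ ![A, B])
    (h : ∀ l m : ℂ, (l • A + m • B).rank ≤ 3) :
    ∃ l m : ℂ, (l, m) ≠ (0, 0) ∧ (l • A + m • B).rank ≤ 2 :=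
  pencil_rank_three_has_rank_two_member_general A B hA hB h
end
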